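/- arXiv:2306.12683 — 4 statements merged into one kernel-verified Lean document; each statement's English description precedes it below -/
import Mathlib

section
/- Let V be the category with three objects a, b, c, whose only non-identity morphisms are α : a → c and β : b → c, and let A : V ⥤ Ab be the diagram with A(c) = A and A(a) = A(b) = 0 for an abelian group A. Then H^0(V, A) = 0, H^1(V, A) ≅ A, and H^n(V, A) = 0 for all n ≥ 2. -/
/- Auxiliary general constructions -/

open CategoryTheory Limits Opposite Simplicial

universe w v u

namespace CatCohomology

section Bar

variable {A : Type u} [Category.{v} A]

/-- The group of `Δ`-cochains of a category `A` with coefficients in a bimodule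
`G : Aᵒᵖ × A ⥤ Ab`: the product over all `Δ`-simplices `τ` of the nerve of `A` of
the groups `G (τ 0, τ (last))`. -/
noncomputable def barObj (G : Aᵒᵖ × A ⥤ AddCommGrpCat.{w}) (Δ : SimplexCategory) :
    AddCommGrpCat.{max u v w} :=
  AddCommGrpCat.of (∀ τ : (nerve A).obj (op Δ), G.obj (op (τ.obj 0), τ.obj (Fin.last Δ.len)))

/-- The cosimplicial abelian group of cochains on the nerve of `A` with coefficients in
a bimodule `G : Aᵒᵖ × A ⥤ Ab`.  Its alternating coface map complex is the standard
cochain complex computing the (Hochschild-Mitchell style) cohomology of the small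
category `A` with coefficients in `G`. -/
noncomputable def barCosimplicial (G : Aᵒᵖ × A ⥤ AddCommGrpCat.{w}) :
    CosimplicialObject AddCommGrpCat.{max u v w} where
  obj Δ := barObj G Δ
  map {Δ₁ Δ₂} g := AddCommGrpCat.ofHom (AddMonoidHom.mk'
    (fun (φ : barObj G Δ₁) (τ : (nerve A).obj (op Δ₂)) =>
        G.map ((τ.map (homOfLE (Fin.zero_le _))).op,
        τ.map (homOfLE (Fin.le_last _))) (φ ((nerve A).map g.op τ)))
    (by intro φ ψ; funext τ; exact map_add _ _ _))
  map_id Δ := by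
    ext φ τ
    show G.map ((τ.map (𝟙 (0 : Fin (Δ.len + 1)))).op, τ.map (𝟙 (Fin.last Δ.len))) (φ τ) = φ τ
    rw [τ.map_id, τ.map_id]
    show G.map (𝟙 (op (τ.obj 0), τ.obj (Fin.last Δ.len))) (φ τ) = φ τ
    rw [G.map_id]; rfl
  map_comp {Δ₁ Δ₂ Δ₃} g h := by
    ext φ τ
    show G.map _ (φ _) = G.map _ (G.map _ (φ ((nerve A).map g.op ((nerve A).map h.op τ))))
    rw [← CategoryTheory.comp_apply, ← G.map_comp]
    apply congrFun; apply congrArg; apply congrArg; apply congrArg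
    refine Prod.ext ?_ ?_
    · show (τ.map (homOfLE _)).op =
        ((((nerve A).map h.op τ).map (homOfLE _)).op ≫ (τ.map (homOfLE _)).op)
      apply Quiver.Hom.unop_inj
      show τ.map _ = τ.map _ ≫ τ.map _
      rw [← τ.map_comp]; congr 1
    · show τ.map (homOfLE _) = (((nerve A).map h.op τ).map (homOfLE _) ≫ τ.map (homOfLE _))
      show τ.map _ = τ.map _ ≫ τ.map _
      rw [← τ.map_comp]; congr 1

/-- The standard cochain complex of a small category with coefficients in a bimodule
`G : Aᵒᵖ × A ⥤ Ab` (with the alternating sum differentials). -/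
noncomputable def cochainComplex (G : Aᵒᵖ × A ⥤ AddCommGrpCat.{w}) :
    CochainComplex AddCommGrpCat.{max u v w} ℕ :=
  (AlgebraicTopology.alternatingCofaceMapComplex _).obj (barCosimplicial G)

/-- The cohomology of a small category with coefficients in a bimodule,
i.e. the Hochschild-Mitchell cohomology `H*(A, G) = Ext*(ℤA, G)` computed by the
standard cochain complex. -/
noncomputable def cohomology (G : Aᵒᵖ × A ⥤ AddCommGrpCat.{w}) (n : ℕ) :
    AddCommGrpCat.{max u v w} :=
  (cochainComplex G).homology n

end Bar

section BarMaps

variable {A : Type u} [Category.{v} A] {B : Type u} [Category.{v} B]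

/-- Restriction of cochains along a functor `f : A ⥤ B`:
the canonical map of cosimplicial abelian groups. -/
noncomputable def barRestriction (f : A ⥤ B) (G : Bᵒᵖ × B ⥤ AddCommGrpCat.{w}) :
    barCosimplicial (A := B) G ⟶ barCosimplicial (f.op.prod f ⋙ G) where
  app Δ := AddCommGrpCat.ofHom (AddMonoidHom.mk'
    (fun (φ : barObj (A := B) G Δ) (τ : (nerve A).obj (op Δ)) => φ (τ ⋙ f))
    (by intro φ ψ; funext τ; rfl))
  naturality {Δ₁ Δ₂} g := by
    ext φ; funext τ
    rfl

/-- The canonical homomorphism `H^n(B, G) ⟶ H^n(A, G ∘ (fᵒᵖ × f))` on the cohomology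
of small categories with coefficients in bimodules, induced by the inverse image along
`f : A ⥤ B` (restriction of cochains). -/
noncomputable def cohomologyMap (f : A ⥤ B) (G : Bᵒᵖ × B ⥤ AddCommGrpCat.{w}) (n : ℕ) :
    cohomology (A := B) G n ⟶ cohomology (f.op.prod f ⋙ G) n :=
  HomologicalComplex.homologyMap
    ((AlgebraicTopology.alternatingCofaceMapComplex _).map (barRestriction f G)) n

/-- The cohomology `H^n(A, G) = Ext^n(Δℤ, G) = lim^n G` of a small category `A` with
coefficients in a diagram of abelian groups `G : A ⥤ Ab`, computed by the standard
cochain complex `C^n(A, G) = ∏_{a₀ → ⋯ → aₙ} G(aₙ)`. -/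
noncomputable def diagCohomology (G : A ⥤ AddCommGrpCat.{w}) (n : ℕ) :
    AddCommGrpCat.{max u v w} :=
  cohomology (CategoryTheory.Prod.snd Aᵒᵖ A ⋙ G) n

/-- The canonical homomorphism `H^n(B, G) ⟶ H^n(A, G ∘ f)` for a functor `f : A ⥤ B`
and a diagram `G : B ⥤ Ab`, induced by the (exact) inverse image functor
`f^* : Ab^B ⥤ Ab^A` (restriction of cochains along `f`). -/
noncomputable def diagCohomologyMap (f : A ⥤ B) (G : B ⥤ AddCommGrpCat.{w}) (n : ℕ) :
    diagCohomology G n ⟶ diagCohomology (f ⋙ G) n :=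
  cohomologyMap f (CategoryTheory.Prod.snd Bᵒᵖ B ⋙ G) n

end BarMaps

/-- The diagram on the category `V = (a ⟶ c ⟵ b)` (the walking cospan) with value `A`
at the vertex `c` and value `0` at `a` and `b`. -/
noncomputable def Vdiag (A : AddCommGrpCat.{u}) : WalkingCospan ⥤ AddCommGrpCat.{u} :=
  WidePullbackShape.wideCospan A (fun _ => AddCommGrpCat.of PUnit) (fun _ => 0)

end CatCohomology

open CatCohomology

/-!
Since `𝒜` vanishes at `a` and `b`, an `n`-cochain amounts to a function on the chains
`x₀ ⟶ ⋯ ⟶ xₙ` of `V` with `xₙ = c`, and such a chain either ends with `c ⟶ c` or is a spike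
`j ⟶ ⋯ ⟶ j ⟶ c` with `j ∈ {a, b}`. Appending `c` to chains is a homotopy showing that every
cocycle of positive degree is cohomologous to one vanishing off the spikes. Cochains supported
on spikes form a subcomplex `A ⟶ A² ⟶ A² ⟶ ⋯` whose differentials are the diagonal and then
alternately `0` and the identity; its cohomology is `A² / A ≅ A` in degree `1` and `0` otherwise.
-/

open AlgebraicTopology

lemma Fin.val_succAbove_eq_ite {n : ℕ} (i : Fin (n + 1)) (q : Fin n) :
    (i.succAbove q : ℕ) = if (q : ℕ) < i then (q : ℕ) else (q : ℕ) + 1 := by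
  rcases lt_or_ge (q : ℕ) i with h | h
  · rw [Fin.succAbove_of_castSucc_lt _ _ h, if_pos h, Fin.val_castSucc]
  · rw [Fin.succAbove_of_le_castSucc _ _ h, if_neg (by omega), Fin.val_succ]

lemma Fin.val_predAbove_zero {n : ℕ} (q : Fin (n + 2)) :
    ((0 : Fin (n + 1)).predAbove q : ℕ) = q - 1 := by
  rw [Fin.predAbove_zero]
  split_ifs with h
  · simp [h]
  · simp [Fin.val_pred]

lemma Fin.sum_neg_one_pow_smul {M : Type*} [AddCommGroup M] (k : ℕ) (x : M) :
    ∑ i : Fin k, (-1 : ℤ) ^ (i : ℕ) • x = if Even k then 0 else x := by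
  rw [← Finset.sum_smul, Fin.sum_neg_one_pow]
  split_ifs <;> simp

lemma AddCommGrpCat.finset_sum_apply {M N : AddCommGrpCat.{u}} {ι : Type*} (s : Finset ι)
    (f : ι → (M ⟶ N)) (x : M) : (∑ i ∈ s, f i) x = ∑ i ∈ s, f i x := by
  change AddCommGrpCat.homAddEquiv (∑ i ∈ s, f i) x = _
  rw [map_sum, AddMonoidHom.finsetSum_apply]
  rfl

namespace CochainComplex

variable (K : CochainComplex AddCommGrpCat.{u} ℕ)

lemma ab_isZero_homology_zero (h : ∀ x, K.d 0 1 x = 0 → x = 0) : IsZero (K.homology 0) := by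
  rw [← HomologicalComplex.exactAt_iff_isZero_homology,
    HomologicalComplex.exactAt_iff' K 0 0 1 prev_nat_zero (by simp), ShortComplex.ab_exact_iff]
  exact fun x hx => ⟨0, by rw [map_zero, h x hx]; rfl⟩

lemma ab_isZero_homology_succ (n : ℕ)
    (h : ∀ x, K.d (n + 1) (n + 2) x = 0 → ∃ y, K.d n (n + 1) y = x) :
    IsZero (K.homology (n + 1)) := by
  rw [← HomologicalComplex.exactAt_iff_isZero_homology,
    HomologicalComplex.exactAt_iff' K n (n + 1) (n + 2) (prev_nat_succ n) (by simp),
    ShortComplex.ab_exact_iff]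
  exact h

noncomputable def abHomologySuccIso (n : ℕ) {M : AddCommGrpCat.{u}}
    (w : AddMonoidHom.ker (K.sc' n (n + 1) (n + 2)).g.hom →+ M)
    (hker : ∀ z, w z = 0 ↔ ∃ y, K.d n (n + 1) y = z.1) (hw : Function.Surjective w) :
    K.homology (n + 1) ≅ M :=
  have hrange : AddMonoidHom.range (K.sc' n (n + 1) (n + 2)).abToCycles = w.ker := by
    ext z
    exact ⟨fun ⟨y, hy⟩ => (hker z).2 ⟨y, congrArg Subtype.val hy⟩,
      fun hz => let ⟨y, hy⟩ := (hker z).1 hz; ⟨y, Subtype.ext hy⟩⟩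
  K.homologyIsoSc' n (n + 1) (n + 2) (prev_nat_succ n) (by simp) ≪≫
    (K.sc' n (n + 1) (n + 2)).abHomologyIso ≪≫
    ((QuotientAddGroup.quotientAddEquivOfEq hrange).trans
      (QuotientAddGroup.quotientKerEquivOfSurjective w hw)).toAddCommGrpIso

end CochainComplex

namespace CategoryTheory.ComposableArrows

variable {C : Type*} [Category C] [Quiver.IsThin C] {n : ℕ}

lemma ext_of_isThin {F G : ComposableArrows C n} (h : ∀ i, F.obj i = G.obj i) : F = G :=
  Functor.ext h fun _ _ _ => Subsingleton.elim _ _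

noncomputable def mkOfObjOfIsThin (f : Fin (n + 1) → C)
    (hf : ∀ i : Fin n, Nonempty (f i.castSucc ⟶ f i.succ)) : ComposableArrows C n :=
  mkOfObjOfMapSucc f fun i => (hf i).some

end CategoryTheory.ComposableArrows

namespace CatCohomology

section Nerve

variable {C : Type u} [Category.{v} C] {n : ℕ}

def face (i : Fin (n + 2)) (τ : ComposableArrows C (n + 1)) : ComposableArrows C n :=
  (nerve C).δ i τ

def degen (i : Fin (n + 1)) (τ : ComposableArrows C n) : ComposableArrows C (n + 1) :=
  (nerve C).σ i τ

lemma face_obj (i : Fin (n + 2)) (τ : ComposableArrows C (n + 1)) (q : Fin (n + 1)) :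
    (face i τ).obj q = τ.obj (i.succAbove q) := rfl

lemma degen_obj (i : Fin (n + 1)) (τ : ComposableArrows C n) (q : Fin (n + 2)) :
    (degen i τ).obj q = τ.obj (i.predAbove q) := rfl

lemma face_obj_last_of_ne_last (τ : ComposableArrows C (n + 1)) {i : Fin (n + 2)}
    (hi : i ≠ Fin.last (n + 1)) : (face i τ).obj (Fin.last n) = τ.obj (Fin.last (n + 1)) :=
  congrArg τ.obj (Fin.succAbove_ne_last_last hi)

lemma face_last_obj_last (τ : ComposableArrows C (n + 1)) :
    (face (Fin.last (n + 1)) τ).obj (Fin.last n) = τ.obj (Fin.last n).castSucc :=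
  congrArg τ.obj (Fin.succAbove_last_apply _)

lemma face_castSucc_castSucc_obj_castSucc_last (τ : ComposableArrows C (n + 2))
    (i : Fin (n + 1)) :
    (face i.castSucc.castSucc τ).obj (Fin.last n).castSucc = τ.obj (Fin.last (n + 1)).castSucc := by
  rw [face_obj]
  exact congrArg τ.obj (Fin.ext (by simp))

lemma degen_zero_obj_castSucc_last (τ : ComposableArrows C (n + 1)) :
    (degen 0 τ).obj (Fin.last (n + 1)).castSucc = τ.obj (Fin.last n).castSucc := by
  rw [degen_obj]
  exact congrArg τ.obj (Fin.ext (by simp))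

lemma face_castSucc_last_eq_face_last [Quiver.IsThin C] (τ : ComposableArrows C (n + 1))
    (h : τ.obj (Fin.last n).castSucc = τ.obj (Fin.last (n + 1))) :
    face (Fin.last n).castSucc τ = face (Fin.last (n + 1)) τ := by
  refine ComposableArrows.ext_of_isThin fun q => ?_
  rw [face_obj, face_obj, Fin.succAbove_last_apply]
  rcases Fin.eq_castSucc_or_eq_last q with ⟨r, rfl⟩ | rfl
  · rw [Fin.succAbove_castSucc_of_lt _ _ (Fin.castSucc_lt_last r)]
  · rw [Fin.succAbove_castSucc_self, Fin.succ_last, h]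

lemma diagCochain_d_apply (F : C ⥤ AddCommGrpCat.{w})
    (φ : (cochainComplex (CategoryTheory.Prod.snd Cᵒᵖ C ⋙ F)).X n)
    (τ : ComposableArrows C (n + 1)) :
    (cochainComplex (CategoryTheory.Prod.snd Cᵒᵖ C ⋙ F)).d n (n + 1) φ τ =
      ∑ i : Fin (n + 2), (-1 : ℤ) ^ (i : ℕ) •
        F.map (τ.map (homOfLE (Fin.le_last (i.succAbove (Fin.last n))))) (φ (face i τ)) := by
  simp only [cochainComplex, alternatingCofaceMapComplex, AlternatingCofaceMapComplex.obj,
    CochainComplex.of_d, AlternatingCofaceMapComplex.objD]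
  erw [AddCommGrpCat.finset_sum_apply, Finset.sum_apply]
  rfl

end Nerve

namespace Vdiag

local notation "Chain" => ComposableArrows WalkingCospan

variable {A : AddCommGrpCat.{u}} {n : ℕ}

noncomputable abbrev cochains (A : AddCommGrpCat.{u}) : CochainComplex AddCommGrpCat.{u} ℕ :=
  cochainComplex (CategoryTheory.Prod.snd WalkingCospanᵒᵖ WalkingCospan ⋙ Vdiag A)

-- In `WalkingCospan` the apex `c` is `none`, and `a`, `b` are `some .left`, `some .right`.
def toApex (x : WalkingCospan) : x ⟶ none :=
  match x with
  | none => 𝟙 _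
  | some j => WidePullbackShape.Hom.term j

lemma eq_of_hom_some {x : WalkingCospan} {j : WalkingPair} (f : x ⟶ some j) : x = some j := by
  change WidePullbackShape.Hom _ _ at f
  cases f; rfl

lemma nonempty_hom_of_eq_or_eq_none {x y : WalkingCospan} (h : y = x ∨ y = none) :
    Nonempty (x ⟶ y) := by
  rcases h with rfl | rfl
  exacts [⟨𝟙 _⟩, ⟨toApex x⟩]

lemma obj_eq_some_of_le (τ : Chain n) {p q : Fin (n + 1)} (hpq : p ≤ q) {j : WalkingPair}
    (hq : τ.obj q = some j) : τ.obj p = some j :=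
  eq_of_hom_some (hq ▸ τ.map (homOfLE hpq))

lemma obj_eq_none_of_le (τ : Chain n) {p q : Fin (n + 1)} (hpq : p ≤ q)
    (hp : τ.obj p = none) : τ.obj q = none := by
  cases h : τ.obj q with
  | none => rfl
  | some j => exact absurd (obj_eq_some_of_le τ hpq h) (by simp [hp])

noncomputable def spike (j : WalkingPair) (n : ℕ) : Chain n :=
  ComposableArrows.mkOfObjOfIsThin (fun q => if (q : ℕ) = n then none else some j) fun i =>
    nonempty_hom_of_eq_or_eq_none (by
      rw [if_neg (show (i.castSucc : ℕ) ≠ n by simp [i.isLt.ne])]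
      split_ifs <;> simp)

lemma spike_obj (j : WalkingPair) (n : ℕ) (q : Fin (n + 1)) :
    (spike j n).obj q = if (q : ℕ) = n then none else some j := rfl

lemma spike_obj_last (j : WalkingPair) (n : ℕ) : (spike j n).obj (Fin.last n) = none := by
  simp [spike_obj]

noncomputable def apexChain (n : ℕ) : Chain n :=
  ComposableArrows.mkOfObjOfIsThin (fun _ => none) fun _ => ⟨𝟙 _⟩

lemma eq_apexChain_of_obj_zero (τ : Chain n) (h : τ.obj 0 = none) : τ = apexChain n :=
  ComposableArrows.ext_of_isThin fun q => obj_eq_none_of_le τ (Fin.zero_le q) h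

lemma spike_zero (j : WalkingPair) : spike j 0 = apexChain 0 :=
  ComposableArrows.ext_of_isThin fun q => by rw [spike_obj, if_pos (Fin.val_eq_zero q)]; rfl

noncomputable def appendApex (σ : Chain n) : Chain (n + 1) :=
  ComposableArrows.mkOfObjOfIsThin (fun q => if h : (q : ℕ) < n + 1 then σ.obj ⟨q, h⟩ else none)
    fun i => by
      by_cases h : (i.succ : ℕ) < n + 1
      · rw [dif_pos (by simp only [Fin.val_castSucc, Fin.val_succ] at h ⊢; omega), dif_pos h]
        exact ⟨σ.map (homOfLE (by simp [Fin.le_def]))⟩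
      · rw [dif_neg h]
        exact ⟨toApex _⟩

lemma appendApex_obj (σ : Chain n) (q : Fin (n + 2)) :
    (appendApex σ).obj q = if h : (q : ℕ) < n + 1 then σ.obj ⟨q, h⟩ else none := rfl

lemma eq_spike_of_obj_castSucc_last (τ : Chain (n + 1)) {j : WalkingPair}
    (hlast : τ.obj (Fin.last (n + 1)) = none) (hpen : τ.obj (Fin.last n).castSucc = some j) :
    τ = spike j (n + 1) := by
  refine ComposableArrows.ext_of_isThin fun q => ?_
  rw [spike_obj]
  split_ifs with hq
  · rwa [show q = Fin.last (n + 1) from Fin.ext hq]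
  · exact obj_eq_some_of_le τ (Fin.le_def.2 (by simp; omega)) hpen

lemma face_castSucc_spike (j : WalkingPair) (i : Fin (n + 1)) :
    face i.castSucc (spike j (n + 1)) = spike j n := by
  refine ComposableArrows.ext_of_isThin fun q => ?_
  simp only [face_obj, spike_obj, Fin.val_succAbove_eq_ite, Fin.val_castSucc]
  have := q.isLt
  have := i.isLt
  split_ifs <;> first | rfl | omega

lemma degen_zero_spike (j : WalkingPair) : degen 0 (spike j (n + 1)) = spike j (n + 2) := by
  refine ComposableArrows.ext_of_isThin fun q => ?_
  rw [degen_obj, spike_obj, spike_obj, Fin.val_predAbove_zero]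
  have := q.isLt
  split_ifs <;> first | rfl | omega

lemma face_last_appendApex (σ : Chain n) : face (Fin.last (n + 1)) (appendApex σ) = σ := by
  refine ComposableArrows.ext_of_isThin fun q => ?_
  rw [face_obj, appendApex_obj, Fin.succAbove_last_apply, dif_pos (by simpa using q.isLt)]
  rfl

lemma face_castSucc_appendApex (σ : Chain (n + 1)) (i : Fin (n + 2)) :
    face i.castSucc (appendApex σ) = appendApex (face i σ) := by
  refine ComposableArrows.ext_of_isThin fun q => ?_
  simp only [face_obj, appendApex_obj, Fin.val_succAbove_eq_ite, Fin.val_castSucc]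
  have := i.isLt
  by_cases hq : (q : ℕ) < n + 1
  · rw [dif_pos hq]
    split_ifs <;> first
      | omega
      | congr 1; ext; simp only [Fin.val_succAbove_eq_ite]; split_ifs <;> omega
  · rw [dif_neg hq]
    split_ifs <;> first | rfl | omega

instance (j : WalkingPair) : Subsingleton ((Vdiag A).obj (some j)) :=
  inferInstanceAs (Subsingleton PUnit)

lemma map_toApex_eq_zero {x : WalkingCospan} {j : WalkingPair} (hx : x = some j)
    (a : (Vdiag A).obj x) : (Vdiag A).map (toApex x) a = 0 := by
  subst hx
  rw [Subsingleton.elim a 0, map_zero]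

lemma map_toApex_injective (x : WalkingCospan) :
    Function.Injective ((Vdiag A).map (toApex x)) := by
  cases x with
  | none => simpa [toApex] using Function.injective_id
  | some j => exact Function.injective_of_subsingleton _

lemma map_toApex_map {x y : WalkingCospan} (f : x ⟶ y) (a : (Vdiag A).obj x) :
    (Vdiag A).map (toApex y) ((Vdiag A).map f a) = (Vdiag A).map (toApex x) a := by
  rw [← ConcreteCategory.comp_apply, ← Functor.map_comp, Subsingleton.elim (f ≫ toApex y)]

def ofApex (x : WalkingCospan) (a : A) : (Vdiag A).obj x :=
  match x with
  | none => a
  | some _ => (0 : PUnit)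

lemma map_toApex_ofApex {x : WalkingCospan} (hx : x = none) (a : A) :
    (Vdiag A).map (toApex x) (ofApex x a) = a := by
  subst hx
  exact ConcreteCategory.congr_hom ((Vdiag A).map_id none) a

/-- The value of a cochain at `σ` lies in `𝒜(σₙ)`, which is `A` or `0`; pushing it to the apex
makes all values live in `A`. -/
noncomputable def eval (σ : Chain n) : (cochains A).X n →+ A :=
  ((Vdiag A).map (toApex _)).hom.comp (Pi.evalAddMonoidHom _ σ)

lemma eval_eq_zero_of_obj_last_eq_some {σ : Chain n} {j : WalkingPair}
    (hσ : σ.obj (Fin.last n) = some j) (φ : (cochains A).X n) : eval σ φ = 0 :=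
  map_toApex_eq_zero hσ _

lemma cochain_ext {φ ψ : (cochains A).X n}
    (h : ∀ σ : Chain n, σ.obj (Fin.last n) = none → eval σ φ = eval σ ψ) : φ = ψ := by
  funext σ
  obtain hσ | ⟨j, hσ⟩ := Option.eq_none_or_eq_some (σ.obj (Fin.last n))
  · exact map_toApex_injective _ (h σ hσ)
  · have : Subsingleton ((Vdiag A).obj (σ.obj (Fin.last n))) := hσ ▸ inferInstance
    exact Subsingleton.elim (α := (Vdiag A).obj (σ.obj (Fin.last n))) _ _

def ofFun (f : Chain n → A) : (cochains A).X n := fun σ => ofApex (σ.obj (Fin.last n)) (f σ)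

lemma eval_ofFun (f : Chain n → A) {σ : Chain n} (hσ : σ.obj (Fin.last n) = none) :
    eval σ (ofFun f) = f σ :=
  map_toApex_ofApex hσ _

lemma eval_d (φ : (cochains A).X n) (τ : Chain (n + 1)) :
    eval τ ((cochains A).d n (n + 1) φ) =
      ∑ i : Fin (n + 2), (-1 : ℤ) ^ (i : ℕ) • eval (face i τ) φ := by
  change (Vdiag A).map (toApex _) ((cochains A).d n (n + 1) φ τ) = _
  rw [diagCochain_d_apply, map_sum]
  refine Finset.sum_congr rfl fun i _ => ?_
  rw [map_zsmul]
  exact congrArg _ (map_toApex_map _ _)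

lemma eval_d_spike (φ : (cochains A).X n) (j : WalkingPair) :
    eval (spike j (n + 1)) ((cochains A).d n (n + 1) φ) =
      if Even n then eval (spike j n) φ else 0 := by
  rw [eval_d, Fin.sum_univ_castSucc, eval_eq_zero_of_obj_last_eq_some (j := j)
    (by rw [face_last_obj_last, spike_obj, if_neg (by simp)]), smul_zero, add_zero]
  simp only [face_castSucc_spike, Fin.val_castSucc, Fin.sum_neg_one_pow_smul, Nat.even_add_one]
  split_ifs <;> rfl

lemma eval_d_spike_one (ψ : (cochains A).X 0) (j : WalkingPair) :
    eval (spike j 1) ((cochains A).d 0 1 ψ) = eval (apexChain 0) ψ := by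
  rw [eval_d_spike, if_pos Even.zero, spike_zero]

lemma eval_d_apexChain (φ : (cochains A).X n) :
    eval (apexChain (n + 1)) ((cochains A).d n (n + 1) φ) =
      if Even n then 0 else eval (apexChain n) φ := by
  have hface (i : Fin (n + 2)) : face i (apexChain (n + 1)) = apexChain n :=
    ComposableArrows.ext_of_isThin fun _ => rfl
  simp only [eval_d, hface, Fin.sum_neg_one_pow_smul, Nat.even_add_one, not_not]

def IsSupportedOnSpikes (φ : (cochains A).X (n + 1)) : Prop :=
  ∀ σ : Chain (n + 1), σ.obj (Fin.last n).castSucc = none → eval σ φ = 0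

lemma IsSupportedOnSpikes.ext {φ ψ : (cochains A).X (n + 1)} (hφ : IsSupportedOnSpikes φ)
    (hψ : IsSupportedOnSpikes ψ) (h : ∀ j, eval (spike j (n + 1)) φ = eval (spike j (n + 1)) ψ) :
    φ = ψ := by
  refine cochain_ext fun σ hσ => ?_
  obtain hpen | ⟨j, hpen⟩ := Option.eq_none_or_eq_some (σ.obj (Fin.last n).castSucc)
  · rw [hφ σ hpen, hψ σ hpen]
  · rw [eq_spike_of_obj_castSucc_last σ hσ hpen]
    exact h j

lemma IsSupportedOnSpikes.d {φ : (cochains A).X (n + 1)} (hφ : IsSupportedOnSpikes φ) :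
    IsSupportedOnSpikes ((cochains A).d (n + 1) (n + 2) φ) := by
  intro τ hτ
  have hlast : τ.obj (Fin.last (n + 1)).castSucc = τ.obj (Fin.last (n + 2)) :=
    hτ.trans (obj_eq_none_of_le τ (Fin.le_last _) hτ).symm
  rw [eval_d, Fin.sum_univ_castSucc, Fin.sum_univ_castSucc,
    Finset.sum_eq_zero fun i _ => by
      rw [hφ _ (by rw [face_castSucc_castSucc_obj_castSucc_last]; exact hτ), smul_zero],
    zero_add, face_castSucc_last_eq_face_last τ hlast, Fin.val_castSucc, Fin.val_last,
    Fin.val_last, show (-1 : ℤ) ^ (n + 2) = -(-1) ^ (n + 1) by ring, neg_smul, add_neg_cancel]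

lemma isSupportedOnSpikes_of_eval_apexChain {φ : (cochains A).X 1}
    (h : eval (apexChain 1) φ = 0) : IsSupportedOnSpikes φ :=
  fun σ hσ => by rwa [eq_apexChain_of_obj_zero σ hσ]

lemma sum_eval_appendApex_face {φ : (cochains A).X (n + 1)}
    (hφ : (cochains A).d (n + 1) (n + 2) φ = 0) (τ : Chain (n + 1)) :
    ∑ i : Fin (n + 2), (-1 : ℤ) ^ (i : ℕ) • eval (appendApex (face i τ)) φ =
      (-1 : ℤ) ^ (n + 1) • eval τ φ := by
  have h := congrArg (eval (appendApex τ)) hφ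
  rw [eval_d, map_zero, Fin.sum_univ_castSucc, face_last_appendApex] at h
  simp only [face_castSucc_appendApex, Fin.val_castSucc, Fin.val_last] at h
  rw [eq_neg_of_add_eq_zero_left h, show (-1 : ℤ) ^ (n + 2) = -(-1) ^ (n + 1) by ring, neg_smul,
    neg_neg]

noncomputable def coneHomotopy (φ : (cochains A).X (n + 1)) : (cochains A).X n :=
  ofFun fun σ => (-1 : ℤ) ^ (n + 1) • eval (appendApex σ) φ

lemma isSupportedOnSpikes_sub_d_coneHomotopy {φ : (cochains A).X (n + 1)}
    (hφ : (cochains A).d (n + 1) (n + 2) φ = 0) :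
    IsSupportedOnSpikes (φ - (cochains A).d n (n + 1) (coneHomotopy φ)) := by
  intro τ hτ
  have hlast : τ.obj (Fin.last (n + 1)) = none := obj_eq_none_of_le τ (Fin.le_last _) hτ
  have hfaces (i : Fin (n + 2)) : (face i τ).obj (Fin.last n) = none := by
    by_cases hi : i = Fin.last (n + 1)
    · rw [hi, face_last_obj_last, hτ]
    · rw [face_obj_last_of_ne_last τ hi, hlast]
  rw [map_sub, eval_d, sub_eq_zero]
  simp only [coneHomotopy, eval_ofFun _ (hfaces _),
    smul_comm ((-1 : ℤ) ^ (_ : ℕ)) ((-1 : ℤ) ^ (n + 1))]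
  rw [← Finset.smul_sum, sum_eval_appendApex_face hφ, smul_smul, ← pow_add,
    Even.neg_one_pow ⟨n + 1, rfl⟩, one_smul]

lemma IsSupportedOnSpikes.eq_d_ofFun_eval_degen {φ : (cochains A).X (n + 2)}
    (hsupp : IsSupportedOnSpikes φ) (hφ : (cochains A).d (n + 2) (n + 3) φ = 0) :
    (cochains A).d (n + 1) (n + 2) (ofFun fun σ => eval (degen 0 σ) φ) = φ := by
  have hψ : IsSupportedOnSpikes (ofFun fun σ : Chain (n + 1) => eval (degen 0 σ) φ) :=
    fun σ hσ => by
      rw [eval_ofFun _ (obj_eq_none_of_le σ (Fin.le_last _) hσ)]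
      exact hsupp _ (by rw [degen_zero_obj_castSucc_last, hσ])
  refine hψ.d.ext hsupp fun j => ?_
  rw [eval_d_spike, eval_ofFun _ (spike_obj_last j _), degen_zero_spike]
  split_ifs with hn
  · rfl
  · have h := congrArg (eval (spike j (n + 3))) hφ
    rw [eval_d_spike, map_zero, if_pos (by simpa [Nat.even_add_one] using hn)] at h
    exact h.symm

lemma exists_d_eq_of_d_eq_zero {φ : (cochains A).X (n + 2)}
    (hφ : (cochains A).d (n + 2) (n + 3) φ = 0) :
    ∃ ψ, (cochains A).d (n + 1) (n + 2) ψ = φ := by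
  set φ' := φ - (cochains A).d (n + 1) (n + 2) (coneHomotopy φ)
  have hφ' : (cochains A).d (n + 2) (n + 3) φ' = 0 := by
    rw [map_sub, hφ, ← ConcreteCategory.comp_apply, HomologicalComplex.d_comp_d]
    exact sub_self _
  refine ⟨coneHomotopy φ + ofFun fun σ => eval (degen 0 σ) φ', ?_⟩
  rw [map_add, (isSupportedOnSpikes_sub_d_coneHomotopy hφ).eq_d_ofFun_eval_degen hφ',
    add_sub_cancel]

lemma eq_zero_of_d_eq_zero {φ : (cochains A).X 0} (hφ : (cochains A).d 0 1 φ = 0) : φ = 0 := by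
  have h := eval_d_spike φ .left
  rw [hφ, map_zero, if_pos Even.zero, spike_zero] at h
  refine cochain_ext fun σ hσ => ?_
  rw [eq_apexChain_of_obj_zero σ hσ, ← h, map_zero]

noncomputable def spikeDifference : AddMonoidHom.ker ((cochains A).d 1 2).hom →+ A :=
  (eval (spike .left 1) - eval (spike .right 1)).comp (AddSubgroup.subtype _)

lemma spikeDifference_eq_zero_iff (φ : AddMonoidHom.ker ((cochains A).d 1 2).hom) :
    spikeDifference φ = 0 ↔ ∃ ψ, (cochains A).d 0 1 ψ = φ := by
  obtain ⟨φ, hφ⟩ := φ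
  change eval (spike .left 1) φ - eval (spike .right 1) φ = 0 ↔ _
  constructor
  · intro h
    refine ⟨ofFun fun _ => eval (spike .left 1) φ, ?_⟩
    have hcocycle : IsSupportedOnSpikes φ := isSupportedOnSpikes_of_eval_apexChain (by
      have h2 := eval_d_apexChain φ
      rwa [if_neg Nat.not_even_one, show (cochains A).d 1 (1 + 1) φ = 0 from hφ, map_zero,
        eq_comm] at h2)
    refine (isSupportedOnSpikes_of_eval_apexChain ?_).ext hcocycle fun j => ?_
    · rw [eval_d_apexChain, if_pos Even.zero]
    · rw [eval_d_spike_one, eval_ofFun _ rfl]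
      cases j
      · rfl
      · exact sub_eq_zero.1 h
  · rintro ⟨ψ, rfl⟩
    rw [eval_d_spike_one, eval_d_spike_one, sub_self]

noncomputable def apexCocycle (x : A) : (cochains A).X 1 :=
  ofFun fun σ => match σ.obj 0 with
    | some .left => x
    | _ => 0

lemma spikeDifference_surjective : Function.Surjective (spikeDifference (A := A)) := by
  intro x
  have hx : IsSupportedOnSpikes (apexCocycle x) := fun σ hσ => by
    rw [apexCocycle, eval_ofFun _ (obj_eq_none_of_le σ (Fin.le_last _) hσ),
      show σ.obj 0 = none from hσ]
  refine ⟨⟨apexCocycle x, ?_⟩, ?_⟩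
  · refine hx.d.ext (fun _ _ => map_zero _) fun j => ?_
    rw [eval_d_spike, if_neg Nat.not_even_one, map_zero]
  · change eval (spike .left 1) (apexCocycle x) - eval (spike .right 1) (apexCocycle x) = x
    rw [apexCocycle, eval_ofFun _ (spike_obj_last _ _), eval_ofFun _ (spike_obj_last _ _)]
    exact sub_zero x

end Vdiag

end CatCohomology

open CatCohomology.Vdiag

/-- Let `V` be the category with three objects `a, b, c` and
non-identity morphisms `α : a ⟶ c`, `β : b ⟶ c`, and let `𝒜 : V ⥤ Ab` take the
value `A` at `c` and `0` at `a` and `b`.  Then `H⁰(V, 𝒜) = 0`, `H¹(V, 𝒜) ≅ A`, and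
`Hⁿ(V, 𝒜) = 0` for `n ≥ 2`. -/
theorem statement2 (A : AddCommGrpCat.{u}) :
    IsZero (diagCohomology (Vdiag A) 0) ∧
    Nonempty (diagCohomology (Vdiag A) 1 ≅ A) ∧
    ∀ n : ℕ, 2 ≤ n → IsZero (diagCohomology (Vdiag A) n) := by
  refine ⟨(cochains A).ab_isZero_homology_zero fun φ hφ => eq_zero_of_d_eq_zero hφ,
    ⟨(cochains A).abHomologySuccIso 0 spikeDifference spikeDifference_eq_zero_iff
      spikeDifference_surjective⟩, fun n hn => ?_⟩
  obtain ⟨n, rfl⟩ := Nat.exists_eq_add_of_le' hn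
  exact (cochains A).ab_isZero_homology_succ (n + 1) fun φ hφ => exists_d_eq_of_d_eq_zero hφ
end

section
/- For every functor f : C → D between small categories and every morphism α of D, the comma category 𝔉f↓α (of the functor 𝔉f : 𝔉C → 𝔉D over the object α of 𝔉D) is isomorphic to the factorization category 𝔉(f⟨α⟩). -/
/- Auxiliary general constructions -/

open CategoryTheory Limits Opposite Simplicial

universe w v u

namespace CatCohomology

/-- The category of factorizations `𝔉A` of a category `A` (Baues-Wirsching):
objects are the morphisms of `A`, and morphisms `g ⟶ h` are pairs `(α, β)` of
morphisms of `A` with `h = α ≫ g ≫ β`. -/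
def FactCat (A : Type u) [Category.{v} A] : Type (max u v) := Arrow A

namespace FactCat

variable {A : Type u} [Category.{v} A] {B : Type u} [Category.{v} B]

instance : Category.{v} (FactCat A) where
  Hom g h := { p : (h.left ⟶ g.left) × (g.right ⟶ h.right) // h.hom = p.1 ≫ g.hom ≫ p.2 }
  id g := ⟨(𝟙 _, 𝟙 _), by simp⟩
  comp {g h k} p q := ⟨(q.1.1 ≫ p.1.1, p.1.2 ≫ q.1.2), by
    obtain ⟨⟨p1, p2⟩, hp⟩ := p; obtain ⟨⟨q1, q2⟩, hq⟩ := q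
    dsimp; rw [hq, hp]; simp⟩
  id_comp p := Subtype.ext (Prod.ext (by simp) (by simp))
  comp_id p := Subtype.ext (Prod.ext (by simp) (by simp))
  assoc p q r := Subtype.ext (Prod.ext (by simp) (by simp))

/-- The codomain functor `cod : 𝔉A ⥤ A`. -/
def codF : FactCat A ⥤ A where
  obj g := g.right
  map p := p.1.2

/-- The functor `(dom, cod) : 𝔉A ⥤ Aᵒᵖ × A`. -/
def domcodF : FactCat A ⥤ Aᵒᵖ × A where
  obj g := (op g.left, g.right)
  map p := (p.1.1.op, p.1.2)

/-- The functor `𝔉f : 𝔉A ⥤ 𝔉B` induced by `f : A ⥤ B`. -/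
def map (f : A ⥤ B) : FactCat A ⥤ FactCat B where
  obj g := Arrow.mk (f.map g.hom)
  map {g h} p := ⟨(f.map p.1.1, f.map p.1.2), by
    obtain ⟨⟨p1, p2⟩, hp⟩ := p
    dsimp
    rw [hp]; simp⟩
  map_id g := Subtype.ext (Prod.ext (f.map_id _) (f.map_id _))
  map_comp p q := Subtype.ext (Prod.ext (f.map_comp _ _) (f.map_comp _ _))

/-- A morphism of `A` as an object of `𝔉A`. -/
def mk' {X Y : A} (f : X ⟶ Y) : FactCat A := Arrow.mk f

end FactCat

variable {Cf : Type u} [Category.{v} Cf] {Df : Type u} [Category.{v} Df] in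
/-- The category `f⟨α⟩` associated to a functor `f : C ⥤ D` and a morphism
`α : d ⟶ d'` of `D`: objects are factorizations `d ⟶ f c ⟶ d'` of `α` through `f`,
and morphisms are morphisms `ν : c ⟶ c'` making the two triangles commute. -/
structure fComma (f : Cf ⥤ Df) {d d' : Df} (α : d ⟶ d') : Type (max u v) where
  pt : Cf
  l : d ⟶ f.obj pt
  r : f.obj pt ⟶ d'
  w : l ≫ r = α

namespace fComma
variable {Cf : Type u} [Category.{v} Cf] {Df : Type u} [Category.{v} Df]
variable {f : Cf ⥤ Df} {d d' : Df} {α : d ⟶ d'}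

instance : Category.{v} (fComma f α) where
  Hom x y := { ν : x.pt ⟶ y.pt // x.l ≫ f.map ν = y.l ∧ x.r = f.map ν ≫ y.r }
  id x := ⟨𝟙 _, by simp⟩
  comp {x y z} p q := ⟨p.1 ≫ q.1, by
    constructor
    · rw [f.map_comp, ← Category.assoc, p.2.1, q.2.1]
    · rw [f.map_comp, Category.assoc, ← q.2.2]; exact p.2.2⟩
  id_comp u := Subtype.ext (by simp)
  comp_id u := Subtype.ext (by simp)
  assoc u v w := Subtype.ext (by simp)

end fComma

end CatCohomology

open CatCohomology

/-!
An object of `𝔉f ↓ α` is a morphism `g : c ⟶ c'` of `C` together with a factorization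
`α = β ≫ f g ≫ β'`; this is exactly the morphism `g` of `f⟨α⟩` from `(β, f g ≫ β')` to
`(β ≫ f g, β')`. Conversely a morphism `ν : (β, β') ⟶ (γ, γ')` of `f⟨α⟩` gives the object
`(ν, β, γ')` of `𝔉f ↓ α`. Going around starting from `𝔉f ↓ α` is the identity on the nose; going
around starting from `𝔉(f⟨α⟩)` replaces `β'` by `f ν ≫ γ'` and `γ` by `β ≫ f ν`, which are equal
to them precisely because `ν` is a morphism of `f⟨α⟩`.
-/

namespace CatCohomology

namespace FactCat

variable {C : Type u} [Category.{v} C]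

def homMk {g h : FactCat C} (a : h.left ⟶ g.left) (b : g.right ⟶ h.right)
    (w : h.hom = a ≫ g.hom ≫ b) : g ⟶ h :=
  ⟨(a, b), w⟩

lemma hom_hext {g g' h h' : FactCat C} (hg : g = g') (hh : h = h') (p : g ⟶ h) (q : g' ⟶ h')
    (h₁ : HEq p.1.1 q.1.1) (h₂ : HEq p.1.2 q.1.2) : HEq p q := by
  subst hg hh
  exact heq_of_eq (Subtype.ext (Prod.ext (eq_of_heq h₁) (eq_of_heq h₂)))

end FactCat

namespace fComma

variable {C : Type u} [Category.{v} C] {D : Type u} [Category.{v} D]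
variable {f : C ⥤ D} {d d' : D} {α : d ⟶ d'}

def homMk {x y : fComma f α} (ν : x.pt ⟶ y.pt) (hl : x.l ≫ f.map ν = y.l)
    (hr : x.r = f.map ν ≫ y.r) : x ⟶ y :=
  ⟨ν, hl, hr⟩

lemma hom_hext {x x' y y' : fComma f α} (hx : x = x') (hy : y = y') (p : x ⟶ y) (q : x' ⟶ y')
    (h : HEq p.1 q.1) : HEq p q := by
  subst hx hy
  exact heq_of_eq (Subtype.ext (eq_of_heq h))

variable (f α) in
def forget : fComma f α ⥤ C where
  obj x := x.pt
  map ν := ν.1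

lemma l_comp_map_comp_r {x y : fComma f α} (ν : x ⟶ y) : x.l ≫ f.map ν.1 ≫ y.r = α := by
  rw [← Category.assoc, ν.2.1, y.w]

def factorizationArrow {c c' : C} (g : c ⟶ c') (β : d ⟶ f.obj c) (β' : f.obj c' ⟶ d')
    (w : β ≫ f.map g ≫ β' = α) : FactCat (fComma f α) :=
  Arrow.mk (homMk (x := ⟨c, β, f.map g ≫ β', w⟩)
    (y := ⟨c', β ≫ f.map g, β', by rw [Category.assoc, w]⟩) g rfl rfl)

def factorizationArrowHom {c₁ c₂ c₁' c₂' : C} {g : c₁ ⟶ c₂} {g' : c₁' ⟶ c₂'}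
    {β : d ⟶ f.obj c₁} {β' : f.obj c₂ ⟶ d'} {γ : d ⟶ f.obj c₁'} {γ' : f.obj c₂' ⟶ d'}
    {w : β ≫ f.map g ≫ β' = α} {w' : γ ≫ f.map g' ≫ γ' = α}
    (a : c₁' ⟶ c₁) (b : c₂ ⟶ c₂') (hg : g' = a ≫ g ≫ b) (hβ : β = γ ≫ f.map a)
    (hβ' : β' = f.map b ≫ γ') :
    factorizationArrow g β β' w ⟶ factorizationArrow g' γ γ' w' :=
  have hl : f.map g' ≫ γ' = f.map a ≫ f.map g ≫ β' := by subst hg hβ'; simp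
  have hr : (β ≫ f.map g) ≫ f.map b = γ ≫ f.map g' := by subst hg hβ; simp
  FactCat.homMk (homMk a hβ.symm hl) (homMk b hr hβ') (Subtype.ext hg)

lemma factorizationArrow_eq_arrowMk {c c' : C} (ν : c ⟶ c') {l : d ⟶ f.obj c} {r : f.obj c ⟶ d'}
    {l' : d ⟶ f.obj c'} {r' : f.obj c' ⟶ d'} (w : l ≫ r = α) (w' : l' ≫ r' = α)
    (hl : l ≫ f.map ν = l') (hr : r = f.map ν ≫ r') :
    factorizationArrow ν l r' (by rw [← Category.assoc, hl, w']) =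
      Arrow.mk (homMk (x := ⟨c, l, r, w⟩) (y := ⟨c', l', r', w'⟩) ν hl hr) := by
  subst hl hr
  rfl

end fComma

section SmallCategory

-- `FactCat.map (fComma.forget f α)` needs `fComma f α` and `C` in the same universe.
variable {C : Type u} [SmallCategory C] {D : Type u} [SmallCategory D]
variable (f : C ⥤ D) {d d' : D} (α : d ⟶ d')

local notation "𝔉f↓α" => CostructuredArrow (FactCat.map f) (FactCat.mk' α)

def costructuredArrowToFactCat : 𝔉f↓α ⥤ FactCat (fComma f α) where
  obj X := fComma.factorizationArrow X.left.hom X.hom.1.1 X.hom.1.2 X.hom.2.symm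
  map u := fComma.factorizationArrowHom u.left.1.1 u.left.1.2 u.left.2
    (congrArg (·.1.1) (CostructuredArrow.w u).symm) (congrArg (·.1.2) (CostructuredArrow.w u).symm)
  map_id _ := rfl
  map_comp _ _ := rfl

def factCatToCostructuredArrow : FactCat (fComma f α) ⥤ 𝔉f↓α :=
  (FactCat.map (fComma.forget f α)).toCostructuredArrow (FactCat.map f) (FactCat.mk' α)
    (fun W => FactCat.homMk W.left.l W.right.r (fComma.l_comp_map_comp_r W.hom).symm)
    (fun {W W'} (u : W ⟶ W') => Subtype.ext (Prod.ext u.1.1.2.1 u.1.2.2.2.symm))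

lemma costructuredArrowToFactCat_comp_factCatToCostructuredArrow :
    costructuredArrowToFactCat f α ⋙ factCatToCostructuredArrow f α = 𝟭 _ :=
  rfl

lemma factCatToCostructuredArrow_comp_costructuredArrowToFactCat :
    factCatToCostructuredArrow f α ⋙ costructuredArrowToFactCat f α = 𝟭 _ := by
  have h_obj (W : FactCat (fComma f α)) :
      (costructuredArrowToFactCat f α).obj ((factCatToCostructuredArrow f α).obj W) = W := by
    obtain ⟨x, y, ν⟩ := W
    obtain ⟨c, l, r, w⟩ := x
    obtain ⟨c', l', r', w'⟩ := y
    obtain ⟨ν, hl, hr⟩ := ν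
    exact fComma.factorizationArrow_eq_arrowMk ν w w' hl hr
  exact Functor.hext h_obj fun W W' u => FactCat.hom_hext (h_obj W) (h_obj W') _ _
    (fComma.hom_hext (congrArg Arrow.left (h_obj W')) (congrArg Arrow.left (h_obj W)) _ _ HEq.rfl)
    (fComma.hom_hext (congrArg Arrow.right (h_obj W)) (congrArg Arrow.right (h_obj W')) _ _ HEq.rfl)

end SmallCategory

end CatCohomology

/-- For every functor `f : C ⥤ D` between small categories and every
morphism `α : d ⟶ d'` of `D`, the comma category `𝔉f ↓ α` is isomorphic (as a
category, i.e. by an invertible pair of functors) to the factorization category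
`𝔉(f⟨α⟩)`. -/
theorem statement8 (C : Type u) [SmallCategory C] (D : Type u) [SmallCategory D]
    (f : C ⥤ D) {d d' : D} (α : d ⟶ d') :
    ∃ (F : CostructuredArrow (FactCat.map f) (show FactCat D from Arrow.mk α) ⥤ FactCat (fComma f α))
      (G : FactCat (fComma f α) ⥤ CostructuredArrow (FactCat.map f) (show FactCat D from Arrow.mk α)),
      F ⋙ G = 𝟭 _ ∧ G ⋙ F = 𝟭 _ :=
  ⟨costructuredArrowToFactCat f α, factCatToCostructuredArrow f α,
    costructuredArrowToFactCat_comp_factCatToCostructuredArrow f α,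
    factCatToCostructuredArrow_comp_costructuredArrowToFactCat f α⟩
end

section
/- Let C be a small category and (dom, cod) : 𝔉C → C^op × C the functor sending an object α of 𝔉C to (dom α, cod α). For any object (a, b) of C^op × C, the connected component of the comma category (dom, cod)↓(a, b) containing a given object (α, (x, y)) — where α is a morphism of C, x : a → dom α and y : cod α → b — has a terminal object, namely (y ∘ α ∘ x, (1_a, 1_b)). -/
/- Auxiliary general constructions -/

open CategoryTheory Limits Opposite Simplicial

universe w v u

open CatCohomology

/-! The composite `x ≫ α ≫ y` of an object `(α, (x, y))` of `(dom, cod) ↓ (a, b)` is invariant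
under morphisms, hence constant on connected components. Among the objects with composite `f`,
the object `(f, (𝟙 a, 𝟙 b))` is terminal: a morphism `(α, (x, y)) ⟶ (f, (𝟙, 𝟙))` is forced to be
`(x, y)`, and `(x, y)` is a morphism exactly when `f = x ≫ α ≫ y`. -/

namespace CatCohomology.FactCat

variable {A : Type u} [Category.{v} A] {a b : A}

def composite (w : CostructuredArrow (domcodF (A := A)) (op a, b)) : a ⟶ b :=
  w.hom.1.unop ≫ w.left.hom ≫ w.hom.2

theorem composite_eq_of_hom {w w' : CostructuredArrow (domcodF (A := A)) (op a, b)}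
    (g : w ⟶ w') : composite w = composite w' := by
  have hx : g.left.1.1.op ≫ w'.hom.1 = w.hom.1 := congrArg Prod.fst (CostructuredArrow.w g)
  have hy : g.left.1.2 ≫ w'.hom.2 = w.hom.2 := congrArg Prod.snd (CostructuredArrow.w g)
  have hα : w'.left.hom = g.left.1.1 ≫ w.left.hom ≫ g.left.1.2 := g.left.2
  rw [composite, composite, hα, ← hx, ← hy]
  dsimp only [domcodF]
  simp only [unop_comp, Quiver.Hom.unop_op, Category.assoc]

theorem composite_eq_of_zigzag {w w' : CostructuredArrow (domcodF (A := A)) (op a, b)}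
    (h : Zigzag w w') : composite w = composite w' := by
  induction h with
  | refl => rfl
  | tail _ hstep ih =>
    rcases hstep with ⟨⟨g⟩⟩ | ⟨⟨g⟩⟩
    · exact ih.trans (composite_eq_of_hom g)
    · exact ih.trans (composite_eq_of_hom g).symm

def compositeObj (f : a ⟶ b) : CostructuredArrow (domcodF (A := A)) (op a, b) :=
  CostructuredArrow.mk (Y := mk' f) (show domcodF.obj (mk' f) ⟶ (op a, b) from (𝟙 (op a), 𝟙 b))

def toCompositeObj {f : a ⟶ b} (w : CostructuredArrow (domcodF (A := A)) (op a, b))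
    (hw : composite w = f) : w ⟶ compositeObj f :=
  CostructuredArrow.homMk ⟨(w.hom.1.unop, w.hom.2), hw.symm⟩
    (Prod.ext (Category.comp_id _) (Category.comp_id _))

instance {f : a ⟶ b} (w : CostructuredArrow (domcodF (A := A)) (op a, b)) :
    Subsingleton (w ⟶ compositeObj f) where
  allEq m m' := by
    have hx (n : w ⟶ compositeObj f) : n.left.1.1.op = w.hom.1 :=
      (Category.comp_id _).symm.trans (congrArg Prod.fst (CostructuredArrow.w n))
    have hy (n : w ⟶ compositeObj f) : n.left.1.2 = w.hom.2 :=
      (Category.comp_id _).symm.trans (congrArg Prod.snd (CostructuredArrow.w n))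
    refine CostructuredArrow.hom_ext _ _ (Subtype.ext (Prod.ext ?_ ?_))
    · exact Quiver.Hom.op_inj ((hx m).trans (hx m').symm)
    · exact (hy m).trans (hy m').symm

def isTerminalCompositeObj {f : a ⟶ b}
    {P : ObjectProperty (CostructuredArrow (domcodF (A := A)) (op a, b))}
    (hP : ∀ w, P w → composite w = f) (hf : P (compositeObj f)) :
    IsTerminal (⟨compositeObj f, hf⟩ : P.FullSubcategory) :=
  IsTerminal.ofUniqueHom (fun w => ObjectProperty.homMk (toCompositeObj w.obj (hP _ w.property)))
    (fun _ _ => ObjectProperty.hom_ext _ (Subsingleton.elim _ _))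

end CatCohomology.FactCat

/-- Let `C` be a small category and `(dom, cod) : 𝔉C ⥤ Cᵒᵖ × C`.
For any object `(a, b)` of `Cᵒᵖ × C`, the connected component of the comma category
`(dom, cod) ↓ (a, b)` containing a given object `z = (α, (x, y))` has a terminal
object, namely `(y ∘ α ∘ x, (1ₐ, 1_b))`. -/
theorem statement10 (C : Type u) [SmallCategory C] (a b : C)
    (z : CostructuredArrow (FactCat.domcodF (A := C)) (op a, b)) :
    ∃ t : ObjectProperty.FullSubcategory
        (fun w : CostructuredArrow (FactCat.domcodF (A := C)) (op a, b) => Zigzag w z),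
      t.obj = CostructuredArrow.mk (S := FactCat.domcodF (A := C))
          (Y := FactCat.mk' (z.hom.1.unop ≫ z.left.hom ≫ z.hom.2))
          (show (FactCat.domcodF (A := C)).obj
              (FactCat.mk' (z.hom.1.unop ≫ z.left.hom ≫ z.hom.2)) ⟶ (op a, b) from
            (𝟙 (op a), 𝟙 b)) ∧
      Nonempty (IsTerminal t) :=
  ⟨_, rfl, ⟨FactCat.isTerminalCompositeObj (fun _ hw => FactCat.composite_eq_of_zigzag hw)
    (Zigzag.of_inv (FactCat.toCompositeObj z rfl))⟩⟩
end

section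
/- Let f : C → D be a functor between small categories. The canonical homomorphism H^0_HM(D, G) → H^0_HM(C, G ∘ (f^op × f)) is an isomorphism for every bimodule G : D^op × D ⥤ Ab if and only if the canonical natural transformation Lan^{f^op × f} ℤC → ℤD is an isomorphism. -/
open CategoryTheory Limits Opposite Simplicial

universe w v u

namespace CatCohomology

section ZCat
variable (C : Type u) [SmallCategory C] (D : Type u) [SmallCategory D]

/-- The bimodule `ℤC : Cᵒᵖ × C ⥤ Ab`: the composition of the hom bifunctor with the
free abelian group functor. -/
noncomputable def ZCat : Cᵒᵖ × C ⥤ AddCommGrpCat.{u} :=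
  Functor.hom C ⋙ AddCommGrpCat.free

variable {C D}

/-- The natural transformation `ℤC ⟶ (fᵒᵖ × f)^* ℤD` induced by the action of `f` on
hom-sets. -/
noncomputable def ZNat (f : C ⥤ D) : ZCat C ⟶ (f.op.prod f) ⋙ ZCat D :=
  Functor.whiskerRight
    ({ app := fun x => TypeCat.ofHom fun (g : x.1.unop ⟶ x.2) => f.map g
       naturality := by
        intro x y p
        ext g
        show f.map (p.1.unop ≫ g ≫ p.2) = _
        show _ = f.map p.1.unop ≫ f.map g ≫ f.map p.2
        simp
        rw [Functor.map_comp (X := x.1.unop) (Y := x.2) (Z := y.2) f g p.2] } :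
      Functor.hom C ⟶ (f.op.prod f) ⋙ Functor.hom D) AddCommGrpCat.free

/-- The canonical comparison morphism `Lan_{fᵒᵖ×f} ℤC ⟶ ℤD`, corresponding to `ZNat f`
under the adjunction `Lan ⊣ (fᵒᵖ×f)^*`. -/
noncomputable def lanComparison (f : C ⥤ D) :
    (f.op.prod f).lan.obj (ZCat C) ⟶ ZCat D :=
  ((Functor.lanAdjunction (f.op.prod f) AddCommGrpCat.{u}).homEquiv (ZCat C) (ZCat D)).symm (ZNat f)

end ZCat

end CatCohomology

open CatCohomology

namespace CategoryTheory.Adjunction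

variable {C D : Type*} [Category C] [Category D] {F : C ⥤ D} {G : D ⥤ C}

theorem isIso_homEquiv_symm_iff_bijective (adj : F ⊣ G) {X : C} {Y : D} (η : X ⟶ G.obj Y) :
    IsIso ((adj.homEquiv X Y).symm η) ↔
      ∀ Z : D, Function.Bijective fun ψ : Y ⟶ Z => η ≫ G.map ψ := by
  rw [isIso_iff_coyoneda_map_bijective]
  refine forall_congr' fun Z => ?_
  have hcomp : (fun ψ : Y ⟶ Z => η ≫ G.map ψ) =
      adj.homEquiv X Z ∘ fun ψ => (adj.homEquiv X Y).symm η ≫ ψ := by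
    funext ψ
    simp [homEquiv_naturality_right]
  rw [hcomp, Equiv.comp_bijective]

end CategoryTheory.Adjunction

/-- Let `f : C ⥤ D` be a functor between small categories.  The
canonical homomorphism `H⁰_HM(D, G) = Hom(ℤD, G) ⟶ Hom(ℤC, G ∘ (fᵒᵖ × f)) =
H⁰_HM(C, G ∘ (fᵒᵖ × f))` is an isomorphism for every bimodule `G : Dᵒᵖ × D ⥤ Ab` if
and only if the canonical natural transformation `Lan_{fᵒᵖ × f} ℤC ⟶ ℤD` is an
isomorphism. -/
theorem statement13 (C : Type u) [SmallCategory C] (D : Type u) [SmallCategory D]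
    (f : C ⥤ D) :
    (∀ G : Dᵒᵖ × D ⥤ AddCommGrpCat.{u},
      Function.Bijective (fun ψ : ZCat D ⟶ G => ZNat f ≫ Functor.whiskerLeft (f.op.prod f) ψ)) ↔
    IsIso (lanComparison f) :=
  ((Functor.lanAdjunction (f.op.prod f) AddCommGrpCat.{u}).isIso_homEquiv_symm_iff_bijective
    (ZNat f)).symm
end
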